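/- arXiv:1510.02023 — 4 statements merged into one kernel-verified Lean document; each statement's English description precedes it below -/
import Mathlib

section
/- Let n be a positive integer, let A be a type (of Wirtinger generators/arcs), and let T be a set of triples (a,b,c) ∈ A × A × A (crossing data). Let rels ⊆ FreeGroup A be the set of Wirtinger relators x_c · x_a · x_b⁻¹ · x_a⁻¹ for (a,b,c) ∈ T, and let G be the presented group ⟨A | rels⟩. Then the assignment C ↦ ρ_C, where ρ_C : G → DihedralGroup n is the group homomorphism determined by ρ_C(x_a) = sr (C a) for each generator x_a, is a well-defined bijection between the set of Fox n-colorings {C : A → ℤ/n | b + c = 2a for every (a,b,c) ∈ T} and the set of group homomorphisms ρ : G → DihedralGroup n that send every generator x_a to a reflection (i.e., for each a ∈ A there exists j ∈ ℤ/n with ρ(x_a) = sr j). -/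
open DihedralGroup

lemma sr_inv {n : ℕ} (i : ZMod n) : (sr i : DihedralGroup n)⁻¹ = sr i := by
  rw [inv_eq_iff_mul_eq_one]; exact sr_mul_self i

lemma relator_calc {n : ℕ} (a b c : ZMod n) :
    (sr c : DihedralGroup n) * sr a * (sr b)⁻¹ * (sr a)⁻¹ = r (2 * a - b - c) := by
  rw [sr_inv, sr_inv, sr_mul_sr, r_mul_sr, sr_mul_sr]
  ring_nf

/-- Fox's theorem: for a group with a Wirtinger-type presentation, Fox `n`-colorings
are in bijection with homomorphisms to the dihedral group of order `2n` sending each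
Wirtinger generator to a reflection, via `C ↦ ρ_C` with `ρ_C(x_a) = sr (C a)`. -/
theorem fox_colorings_equiv_dihedral_reps (n : ℕ) (hn : 0 < n) (A : Type)
    (T : Set (A × A × A)) (rels : Set (FreeGroup A))
    (hrels : rels = {w : FreeGroup A | ∃ a b c : A, (a, b, c) ∈ T ∧
      w = FreeGroup.of c * FreeGroup.of a * (FreeGroup.of b)⁻¹ * (FreeGroup.of a)⁻¹}) :
    ∃ e : {C : A → ZMod n // ∀ a b c : A, (a, b, c) ∈ T → C b + C c = 2 * C a} ≃
        {ρ : PresentedGroup rels →* DihedralGroup n //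
          ∀ a : A, ∃ j : ZMod n, ρ (PresentedGroup.of a) = DihedralGroup.sr j},
      ∀ C a, (e C).val (PresentedGroup.of a) = DihedralGroup.sr (C.val a) := by
  subst hrels
  have key : ∀ C : {C : A → ZMod n // ∀ a b c : A, (a, b, c) ∈ T → C b + C c = 2 * C a},
      ∀ w ∈ {w : FreeGroup A | ∃ a b c : A, (a, b, c) ∈ T ∧
        w = FreeGroup.of c * FreeGroup.of a * (FreeGroup.of b)⁻¹ * (FreeGroup.of a)⁻¹},
      FreeGroup.lift (fun a => (sr (C.val a) : DihedralGroup n)) w = 1 := by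
    rintro C w ⟨a, b, c, hT, rfl⟩
    simp only [map_mul, map_inv, FreeGroup.lift_apply_of]
    rw [relator_calc, one_def]
    congr 1
    linear_combination - C.prop a b c hT
  refine ⟨{
    toFun := fun C => ⟨PresentedGroup.toGroup (key C), fun a =>
      ⟨C.val a, PresentedGroup.toGroup.of (key C)⟩⟩
    invFun := fun ρ => ⟨fun a => (ρ.prop a).choose, ?_⟩
    left_inv := ?_
    right_inv := ?_ }, fun C a => PresentedGroup.toGroup.of (key C)⟩
  · intro a b c hT
    have h1 := (ρ.prop a).choose_spec
    have h2 := (ρ.prop b).choose_spec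
    have h3 := (ρ.prop c).choose_spec
    have hrel : (PresentedGroup.of c * PresentedGroup.of a * (PresentedGroup.of b)⁻¹ *
        (PresentedGroup.of a)⁻¹ : PresentedGroup {w : FreeGroup A | ∃ a b c : A, (a, b, c) ∈ T ∧
          w = FreeGroup.of c * FreeGroup.of a * (FreeGroup.of b)⁻¹ * (FreeGroup.of a)⁻¹}) = 1 := by
      apply (QuotientGroup.eq_one_iff _).2
      exact Subgroup.subset_normalClosure ⟨a, b, c, hT, rfl⟩
    have := congrArg ρ.val hrel
    rw [map_one, map_mul, map_mul, map_mul, map_inv, map_inv, h1, h2, h3,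
      relator_calc, one_def] at this
    have := r.inj this
    linear_combination -this
  · intro C
    apply Subtype.ext
    funext a
    exact sr.inj ((Exists.choose_spec (⟨C.val a, PresentedGroup.toGroup.of (key C)⟩ :
      ∃ j, (PresentedGroup.toGroup (key C)) (PresentedGroup.of a) = sr j)).symm.trans
      (PresentedGroup.toGroup.of (key C)))
  · intro ρ
    exact Subtype.ext (MonoidHom.ext fun x =>
      (PresentedGroup.toGroup.unique (key _) ρ.val fun a => (ρ.prop a).choose_spec).symm)
end

section
/- Let n be a positive integer, let M be a k × k integer matrix, and suppose there exist matrices U, V invertible over ℤ (i.e., units of the ring of k × k integer matrices) and s : Fin k → ℤ such that U · M · V = diag(s₁, …, s_k). Then the number of solutions of M over ℤ/n, i.e. the number of x ∈ (ℤ/n)^k with (M mod n)·x = 0, equals ∏_{i} gcd(|s i|, n). -/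
lemma card_ann (n : ℕ) (hn : 0 < n) (a : ℤ) :
    Nat.card {y : ZMod n // (a : ZMod n) * y = 0} = Int.gcd a n := by
  haveI : NeZero n := ⟨hn.ne'⟩
  set f : ZMod n →+ ZMod n := AddMonoidHom.mulLeft (a : ZMod n) with hf
  have hker : Nat.card {y : ZMod n // (a : ZMod n) * y = 0} = Nat.card f.ker := rfl
  have hrange : f.range = AddSubgroup.zmultiples ((a : ℤ) : ZMod n) := by
    ext x
    constructor
    · rintro ⟨y, rfl⟩
      refine ⟨(y.val : ℤ), ?_⟩
      show (y.val : ℤ) • ((a : ℤ) : ZMod n) = (a : ZMod n) * y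
      rw [zsmul_eq_mul]
      rw [mul_comm]
      congr 1
      simp [ZMod.natCast_val]
    · rintro ⟨k, rfl⟩
      exact ⟨((k : ℤ) : ZMod n), by simp [f, zsmul_eq_mul, mul_comm]⟩
  set g : ℕ := Int.gcd a n with hg
  have hgdvd : g ∣ n := by
    rw [hg, Int.gcd]
    simpa using Nat.gcd_dvd_right a.natAbs n
  have hcard_range : Nat.card f.range = n / g := by
    rw [hrange, Nat.card_zmultiples]
    have heq : ((a : ℤ) : ZMod n) = ((a.natAbs : ℕ) : ZMod n) ∨
        ((a : ℤ) : ZMod n) = -((a.natAbs : ℕ) : ZMod n) := by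
      rcases Int.natAbs_eq a with h | h
      · left; conv_lhs => rw [h, Int.cast_natCast]
      · right; conv_lhs => rw [h, Int.cast_neg, Int.cast_natCast]
    have horder : addOrderOf ((a : ℤ) : ZMod n) = addOrderOf ((a.natAbs : ℕ) : ZMod n) := by
      rcases heq with h | h <;> rw [h]; rw [addOrderOf_neg]
    rw [horder, ZMod.addOrderOf_coe _ hn.ne', hg, Int.gcd, Nat.gcd_comm]
    simp
  have hiso : Nat.card (ZMod n ⧸ f.ker) = n / g := by
    rw [Nat.card_congr (QuotientAddGroup.quotientKerEquivRange f).toEquiv, hcard_range]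
  have htot := AddSubgroup.card_eq_card_quotient_mul_card_addSubgroup f.ker
  rw [Nat.card_zmod, hiso] at htot
  have hpos : 0 < n / g := Nat.div_pos (Nat.le_of_dvd hn hgdvd)
    (Nat.pos_of_dvd_of_pos hgdvd hn)
  have : (n / g) * g = n := Nat.div_mul_cancel hgdvd
  rw [hker]
  exact Nat.eq_of_mul_eq_mul_left hpos (by rw [← htot, this])

theorem card_solutions_of_smith_normal_form (n : ℕ) (hn : 0 < n) (k : ℕ)
    (M U V : Matrix (Fin k) (Fin k) ℤ) (hU : IsUnit U) (hV : IsUnit V)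
    (s : Fin k → ℤ) (h : U * M * V = Matrix.diagonal s) :
    Nat.card {x : Fin k → ZMod n // (M.map (Int.cast : ℤ → ZMod n)).mulVec x = 0} =
      ∏ i, Int.gcd (s i) n := by
  set f : ℤ →+* ZMod n := Int.castRingHom (ZMod n) with hfdef
  set Mn := M.map (Int.cast : ℤ → ZMod n) with hMn
  set Un := U.map (Int.cast : ℤ → ZMod n) with hUn
  set Vn := V.map (Int.cast : ℤ → ZMod n) with hVn
  set d : Fin k → ZMod n := fun i => ((s i : ℤ) : ZMod n) with hd
  have hdiag : Un * Mn * Vn = Matrix.diagonal d := by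
    show U.map f * M.map f * V.map f = _
    rw [← Matrix.map_mul, ← Matrix.map_mul, h,
      Matrix.diagonal_map (by simp : f 0 = 0)]
    rfl
  have hUu : IsUnit Un := hU.map (RingHom.mapMatrix f)
  have hVu : IsUnit Vn := hV.map (RingHom.mapMatrix f)
  set W : Matrix (Fin k) (Fin k) (ZMod n) := hVu.unit⁻¹.val with hW
  set W' : Matrix (Fin k) (Fin k) (ZMod n) := hUu.unit⁻¹.val with hW'
  have hVW : Vn * W = 1 := hVu.mul_val_inv
  have hWV : W * Vn = 1 := hVu.val_inv_mul
  have hUW' : W' * Un = 1 := hUu.val_inv_mul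
  -- equivalence between solution sets
  have e1 : {x : Fin k → ZMod n // Mn.mulVec x = 0} ≃
      {y : Fin k → ZMod n // (Matrix.diagonal d).mulVec y = 0} := by
    refine ⟨fun x => ⟨W.mulVec x.1, ?_⟩, fun y => ⟨Vn.mulVec y.1, ?_⟩, ?_, ?_⟩
    · rw [← hdiag, Matrix.mulVec_mulVec, mul_assoc, hVW, mul_one, ← Matrix.mulVec_mulVec,
        x.2, Matrix.mulVec_zero]
    · have h0 : (Un * Mn * Vn).mulVec y.1 = 0 := by rw [hdiag]; exact y.2
      have : (W' * (Un * Mn * Vn)).mulVec y.1 = 0 := by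
        rw [← Matrix.mulVec_mulVec, h0, Matrix.mulVec_zero]
      rw [show W' * (Un * Mn * Vn) = Mn * Vn by rw [← mul_assoc, ← mul_assoc, hUW', one_mul],
        ← Matrix.mulVec_mulVec] at this
      exact this
    · intro x
      ext i
      simp [Matrix.mulVec_mulVec, hVW, Matrix.one_mulVec]
    · intro y
      ext i
      simp [Matrix.mulVec_mulVec, hWV, Matrix.one_mulVec]
  have e2 : {y : Fin k → ZMod n // (Matrix.diagonal d).mulVec y = 0} ≃
      ∀ i : Fin k, {z : ZMod n // d i * z = 0} := by
    refine (Equiv.subtypeEquivRight ?_).trans (Equiv.subtypePiEquivPi)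
    intro y
    rw [funext_iff]
    refine forall_congr' fun i => ?_
    rw [Matrix.mulVec_diagonal]
    simp
  rw [Nat.card_congr (e1.trans e2), Nat.card_pi]
  exact Finset.prod_congr rfl fun i _ => card_ann n hn (s i)
end

section
/- Let n be a positive integer and let M be a k × (k+1) integer matrix each of whose rows sums to zero. Fix a column index j₀, let M' be the k × k matrix obtained from M by deleting column j₀, and suppose there exist matrices U, V invertible over ℤ and s : Fin k → ℤ with U · M' · V = diag(s₁, …, s_k). Then the number of x ∈ (ℤ/n)^{k+1} with (M mod n)·x = 0 equals n · ∏_{i} gcd(|s i|, n). -/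
open Matrix Finset

private lemma card_single_eq (n : ℕ) (hn : 0 < n) (a : ℤ) :
    Nat.card {t : ZMod n // (a : ZMod n) * t = 0} = Int.gcd a n := by
  haveI : NeZero n := ⟨hn.ne'⟩
  set f : ZMod n →+ ZMod n := AddMonoidHom.mulLeft (a : ZMod n) with hf
  have hker : Nat.card {t : ZMod n // (a : ZMod n) * t = 0} = Nat.card f.ker :=
    Nat.card_congr (Equiv.subtypeEquivRight fun t => by
      simp [hf, AddMonoidHom.mem_ker])
  have hrange : f.range = AddSubgroup.zmultiples ((a : ZMod n)) := by
    ext t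
    constructor
    · rintro ⟨x, rfl⟩
      obtain ⟨m, rfl⟩ := ZMod.intCast_surjective x
      exact ⟨m, by simp [hf, zsmul_eq_mul, mul_comm]⟩
    · rintro ⟨m, rfl⟩
      exact ⟨(m : ZMod n), by simp [hf, zsmul_eq_mul, mul_comm]⟩
  have hgcd : Int.gcd a (n : ℤ) = Nat.gcd a.natAbs n := by
    simp [Int.gcd]
  have horder : addOrderOf ((a : ZMod n)) = n / Int.gcd a (n : ℤ) := by
    have hcast : ((a : ZMod n)) = ((a.natAbs : ZMod n)) ∨
        ((a : ZMod n)) = -((a.natAbs : ZMod n)) := by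
      rcases Int.natAbs_eq a with ha | ha
      · left
        conv_lhs => rw [ha]
        exact Int.cast_natCast _
      · right
        conv_lhs => rw [ha]
        push_cast
        rw [Int.abs_eq_natAbs, Int.cast_natCast]
    have hABS : addOrderOf ((a : ZMod n)) = addOrderOf ((a.natAbs : ZMod n)) := by
      rcases hcast with hc | hc
      · rw [hc]
      · rw [hc, addOrderOf_neg]
    rw [hABS, ZMod.addOrderOf_coe _ hn.ne', hgcd, Nat.gcd_comm]
  have h2 : f.ker.index = n / Int.gcd a (n : ℤ) := by
    rw [AddSubgroup.index, Nat.card_congr (QuotientAddGroup.quotientKerEquivRange f).toEquiv,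
      hrange, Nat.card_zmultiples, horder]
  have h1 : f.ker.index * Nat.card f.ker = n := by
    rw [AddSubgroup.index_mul_card, Nat.card_zmod]
  have hgdvd : Int.gcd a (n : ℤ) ∣ n := by rw [hgcd]; exact Nat.gcd_dvd_right _ _
  have hgpos : 0 < Int.gcd a (n : ℤ) := by rw [hgcd]; exact Nat.gcd_pos_of_pos_right _ hn
  have hquot : 0 < n / Int.gcd a (n : ℤ) := Nat.div_pos (Nat.le_of_dvd hn hgdvd) hgpos
  rw [hker]
  refine Nat.eq_of_mul_eq_mul_left hquot ?_
  calc (n / Int.gcd a (n : ℤ)) * Nat.card f.ker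
      = f.ker.index * Nat.card f.ker := by rw [h2]
    _ = n := h1
    _ = (n / Int.gcd a (n : ℤ)) * Int.gcd a (n : ℤ) := (Nat.div_mul_cancel hgdvd).symm

private lemma card_diag (n : ℕ) (hn : 0 < n) (k : ℕ) (d : Fin k → ℤ) :
    Nat.card {y : Fin k → ZMod n // (Matrix.diagonal fun i => ((d i : ZMod n))).mulVec y = 0} =
      ∏ i, Int.gcd (d i) (n : ℤ) := by
  haveI : NeZero n := ⟨hn.ne'⟩
  have e1 : {y : Fin k → ZMod n // (Matrix.diagonal fun i => ((d i : ZMod n))).mulVec y = 0}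
      ≃ ∀ i, {t : ZMod n // (d i : ZMod n) * t = 0} :=
    (Equiv.subtypeEquivRight fun y => by
      simp [funext_iff, Matrix.mulVec_diagonal]).trans (Equiv.subtypePiEquivPi)
  rw [Nat.card_congr e1, Nat.card_pi]
  exact Finset.prod_congr rfl fun i _ => card_single_eq n hn (d i)

private lemma card_transfer {R : Type*} [CommRing R] {k : ℕ} (A : Matrix (Fin k) (Fin k) R)
    (u v : (Matrix (Fin k) (Fin k) R)ˣ) :
    Nat.card {y : Fin k → R // A.mulVec y = 0} =
      Nat.card {z : Fin k → R // ((u : Matrix (Fin k) (Fin k) R) * A * (v : Matrix (Fin k) (Fin k) R)).mulVec z = 0} := by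
  have h1 : ((u : Matrix (Fin k) (Fin k) R) * A * (v : Matrix (Fin k) (Fin k) R)) *
        (↑v⁻¹ : Matrix (Fin k) (Fin k) R)
      = (u : Matrix (Fin k) (Fin k) R) * A := by
    rw [mul_assoc ((u : Matrix (Fin k) (Fin k) R) * A) (↑v) (↑v⁻¹), Units.mul_inv, mul_one]
  have h2 : (↑u⁻¹ : Matrix (Fin k) (Fin k) R) *
        ((u : Matrix (Fin k) (Fin k) R) * A * (v : Matrix (Fin k) (Fin k) R))
      = A * (v : Matrix (Fin k) (Fin k) R) := by
    rw [← mul_assoc, ← mul_assoc, Units.inv_mul, one_mul]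
  apply Nat.card_congr
  refine ⟨fun y => ⟨(↑v⁻¹ : Matrix (Fin k) (Fin k) R).mulVec y, ?_⟩,
    fun z => ⟨(↑v : Matrix (Fin k) (Fin k) R).mulVec z, ?_⟩, ?_, ?_⟩
  · rw [Matrix.mulVec_mulVec, h1, ← Matrix.mulVec_mulVec, y.2, Matrix.mulVec_zero]
  · calc A *ᵥ ((↑v : Matrix (Fin k) (Fin k) R) *ᵥ ↑z)
        = (A * (v : Matrix (Fin k) (Fin k) R)) *ᵥ (z : Fin k → R) := Matrix.mulVec_mulVec _ _ _
      _ = (↑u⁻¹ : Matrix (Fin k) (Fin k) R) *ᵥ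
            (((u : Matrix (Fin k) (Fin k) R) * A * (v : Matrix (Fin k) (Fin k) R)) *ᵥ (z : Fin k → R)) := by
          rw [Matrix.mulVec_mulVec, h2]
      _ = 0 := by rw [z.2, Matrix.mulVec_zero]
  · intro y
    apply Subtype.ext
    show (↑v : Matrix (Fin k) (Fin k) R) *ᵥ ((↑v⁻¹ : Matrix (Fin k) (Fin k) R) *ᵥ ↑y) = ↑y
    rw [Matrix.mulVec_mulVec, Units.mul_inv, Matrix.one_mulVec]
  · intro z
    apply Subtype.ext
    show (↑v⁻¹ : Matrix (Fin k) (Fin k) R) *ᵥ ((↑v : Matrix (Fin k) (Fin k) R) *ᵥ ↑z) = ↑z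
    rw [Matrix.mulVec_mulVec, Units.inv_mul, Matrix.one_mulVec]

/-- Ge–Jablan–Kauffman–Lopes: if each row of the `k × (k+1)` integer matrix `M` sums to
zero and the square matrix `M'` obtained by deleting column `j₀` has invariant factors
`s₁, …, s_k`, then the number of solutions of `M` over `ℤ/n` is `n · ∏ gcd(sᵢ, n)`. -/
theorem card_solutions_row_sums_zero_of_smith_normal_form (n : ℕ) (hn : 0 < n) (k : ℕ)
    (M : Matrix (Fin k) (Fin (k + 1)) ℤ) (hrows : ∀ i, ∑ j, M i j = 0)
    (j₀ : Fin (k + 1)) (M' : Matrix (Fin k) (Fin k) ℤ)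
    (hM' : M' = M.submatrix id j₀.succAbove)
    (U V : Matrix (Fin k) (Fin k) ℤ) (hU : IsUnit U) (hV : IsUnit V)
    (s : Fin k → ℤ) (h : U * M' * V = Matrix.diagonal s) :
    Nat.card {x : Fin (k + 1) → ZMod n // (M.map (Int.cast : ℤ → ZMod n)).mulVec x = 0} =
      n * ∏ i, Int.gcd (s i) n := by
  haveI : NeZero n := ⟨hn.ne'⟩
  set Mb : Matrix (Fin k) (Fin (k + 1)) (ZMod n) := M.map (Int.cast : ℤ → ZMod n) with hMb
  set A : Matrix (Fin k) (Fin k) (ZMod n) := M'.map (Int.cast : ℤ → ZMod n) with hA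
  have hrowsb : ∀ i, ∑ j, Mb i j = 0 := by
    intro i
    have := congrArg (Int.cast : ℤ → ZMod n) (hrows i)
    push_cast at this
    simpa [hMb, Matrix.map_apply] using this
  have hAentry : ∀ i j, A i j = Mb i (j₀.succAbove j) := by
    intro i j
    simp [hA, hM', hMb, Matrix.map_apply, Matrix.submatrix_apply]
  -- key algebraic identity
  have key : ∀ x : Fin (k + 1) → ZMod n,
      A.mulVec (fun j => x (j₀.succAbove j) - x j₀) = Mb.mulVec x := by
    intro x
    funext i
    have h0 : Mb i j₀ + ∑ j : Fin k, Mb i (j₀.succAbove j) = 0 :=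
      (Fin.sum_univ_succAbove (fun j => Mb i j) j₀).symm.trans (hrowsb i)
    have hsum : ∑ j : Fin k, Mb i (j₀.succAbove j) = -Mb i j₀ :=
      eq_neg_of_add_eq_zero_right h0
    simp only [Matrix.mulVec, dotProduct]
    rw [Fin.sum_univ_succAbove (fun j => Mb i j * x j) j₀]
    simp only [hAentry, mul_sub]
    rw [Finset.sum_sub_distrib, ← Finset.sum_mul, hsum]
    ring
  -- split off the constant part
  have eA : {x : Fin (k + 1) → ZMod n // Mb.mulVec x = 0} ≃
      (ZMod n) × {y : Fin k → ZMod n // A.mulVec y = 0} := by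
    refine ⟨fun x => ⟨x.1 j₀, ⟨fun j => x.1 (j₀.succAbove j) - x.1 j₀, by
        rw [key]; exact x.2⟩⟩,
      fun p => ⟨j₀.insertNth p.1 (fun j => p.2.1 j + p.1), ?_⟩, ?_, ?_⟩
    · rw [← key]
      have hx : (fun j : Fin k =>
          (j₀.insertNth (α := fun _ => ZMod n) p.1 fun j => p.2.1 j + p.1) (j₀.succAbove j)
          - (j₀.insertNth (α := fun _ => ZMod n) p.1 fun j => p.2.1 j + p.1) j₀) = p.2.1 := by
        funext j; simp
      rw [hx]; exact p.2.2
    · intro x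
      apply Subtype.ext
      funext j'
      rcases eq_or_ne j' j₀ with rfl | hne
      · simp
      · obtain ⟨j, rfl⟩ := Fin.exists_succAbove_eq hne
        simp
    · intro p
      refine Prod.ext (by simp) (Subtype.ext ?_)
      funext j
      simp
  rw [Nat.card_congr eA, Nat.card_prod, Nat.card_zmod]
  congr 1
  -- cast SNF relation to ZMod n
  have hUb : IsUnit (U.map (Int.cast : ℤ → ZMod n)) := by
    simpa [RingHom.mapMatrix_apply] using
      hU.map (RingHom.mapMatrix (Int.castRingHom (ZMod n)) :
        Matrix (Fin k) (Fin k) ℤ →+* Matrix (Fin k) (Fin k) (ZMod n))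
  have hVb : IsUnit (V.map (Int.cast : ℤ → ZMod n)) := by
    simpa [RingHom.mapMatrix_apply] using
      hV.map (RingHom.mapMatrix (Int.castRingHom (ZMod n)) :
        Matrix (Fin k) (Fin k) ℤ →+* Matrix (Fin k) (Fin k) (ZMod n))
  obtain ⟨u, hu⟩ := hUb
  obtain ⟨v, hv⟩ := hVb
  have hA2 : (u : Matrix (Fin k) (Fin k) (ZMod n)) * A * (v : Matrix (Fin k) (Fin k) (ZMod n))
      = Matrix.diagonal fun i => ((s i : ZMod n)) := by
    rw [hu, hv, hA]
    have hmap : U.map (Int.cast : ℤ → ZMod n) * M'.map (Int.cast : ℤ → ZMod n) *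
        V.map (Int.cast : ℤ → ZMod n) = (U * M' * V).map (Int.cast : ℤ → ZMod n) := by
      ext i j
      simp [Matrix.mul_apply, Matrix.map_apply, Finset.mul_sum, Finset.sum_mul]
    rw [hmap, h, Matrix.diagonal_map (by simp)]
  have htrans := card_transfer A u v
  rw [hA2] at htrans
  rw [htrans, card_diag n hn k s]
end

section
/- Let M be a k × k integer matrix, let m ≤ k, and suppose there exist injective maps f, g : Fin m → Fin k such that the m × m submatrix of M with rows f and columns g has determinant 1 or −1. Then the cokernel of M can be generated, as an abelian group, by k − m elements. -/
/-- If a `k × k` integer matrix `M` has an `m × m` submatrix with determinant `±1`, then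
the cokernel of `M` is generated, as an abelian group, by `k - m` elements. -/
theorem coker_generated_by_of_submatrix_isUnit (k m : ℕ) (hm : m ≤ k)
    (M : Matrix (Fin k) (Fin k) ℤ) (f g : Fin m → Fin k)
    (hf : Function.Injective f) (hg : Function.Injective g)
    (hminor : (M.submatrix f g).det = 1 ∨ (M.submatrix f g).det = -1) :
    ∃ S : Finset ((Fin k → ℤ) ⧸ Submodule.span ℤ (Set.range fun r => M r)),
      S.card ≤ k - m ∧
        AddSubgroup.closure
          ((S : Set ((Fin k → ℤ) ⧸ Submodule.span ℤ (Set.range fun r => M r)))) = ⊤ := by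
  classical
  set N := Submodule.span ℤ (Set.range fun r => M r) with hN
  set π := N.mkQ with hπ
  set A := M.submatrix f g with hA
  have hU : IsUnit A.det := Int.isUnit_iff.mpr hminor
  set B := A⁻¹ with hB
  have hBA : B * A = 1 := Matrix.nonsing_inv_mul A hU
  set T : Finset (Fin k) := (Finset.univ.image g)ᶜ with hT
  have hTcard : T.card = k - m := by
    rw [hT, Finset.card_compl, Finset.card_image_of_injective _ hg, Finset.card_univ,
      Fintype.card_fin, Fintype.card_fin]
  refine ⟨T.image (fun j => π (Pi.single j 1)), le_trans Finset.card_image_le hTcard.le, ?_⟩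
  set S := T.image (fun j => π (Pi.single j 1)) with hS
  have hv : ∀ i : Fin m, (∑ t, B i t • M (f t)) ∈ N := fun i =>
    Submodule.sum_mem _ (fun t _ => Submodule.smul_mem _ _ (Submodule.subset_span ⟨f t, rfl⟩))
  have hvval : ∀ i s, (∑ t, B i t • M (f t)) (g s) = if i = s then 1 else 0 := by
    intro i s
    calc (∑ t, B i t • M (f t)) (g s) = ∑ t, B i t * M (f t) (g s) := by
          simp [Finset.sum_apply]
      _ = (B * A) i s := by simp [Matrix.mul_apply, hA, Matrix.submatrix_apply]
      _ = if i = s then 1 else 0 := by rw [hBA]; simp [Matrix.one_apply]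
  have key : ∀ i : Fin m,
      Pi.single (g i) (1:ℤ) =
        (∑ t, B i t • M (f t)) - ∑ j ∈ T, (∑ t, B i t • M (f t)) j • Pi.single j 1 := by
    intro i
    funext x
    have hsum : (∑ j ∈ T, (∑ t, B i t • M (f t)) j • Pi.single j (1:ℤ)) x
        = if x ∈ T then (∑ t, B i t • M (f t)) x else 0 := by
      rw [Finset.sum_apply]
      by_cases hx : x ∈ T
      · rw [if_pos hx, Finset.sum_eq_single x]
        · simp
        · intro j hj hjx; simp [Pi.single_apply, Ne.symm hjx]
        · intro h; exact absurd hx h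
      · rw [if_neg hx]
        refine Finset.sum_eq_zero fun j hj => ?_
        have : x ≠ j := fun h => hx (h ▸ hj)
        simp [Pi.single_apply, this]
    rw [Pi.sub_apply, hsum]
    by_cases hx : x ∈ T
    · rw [if_pos hx, sub_self]
      have : g i ≠ x := by
        intro h
        rw [hT, Finset.mem_compl] at hx
        exact hx (h ▸ Finset.mem_image_of_mem g (Finset.mem_univ i))
      simp [Pi.single_apply, Ne.symm this]
    · rw [if_neg hx, sub_zero]
      have hx' : x ∈ Finset.univ.image g := by
        rw [hT, Finset.mem_compl, not_not] at hx; exact hx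
      obtain ⟨s, -, rfl⟩ := Finset.mem_image.mp hx'
      rw [hvval i s]
      rcases eq_or_ne i s with h | h
      · subst h; simp
      · have : g i ≠ g s := fun hgs => h (hg hgs)
        simp [Pi.single_apply, Ne.symm this, h]
  have hmem : ∀ j : Fin k, π (Pi.single j 1) ∈ AddSubgroup.closure (S : Set _) := by
    intro j
    by_cases hj : j ∈ T
    · exact AddSubgroup.subset_closure
        (Finset.mem_coe.mpr (Finset.mem_image_of_mem _ hj))
    · have hj' : j ∈ Finset.univ.image g := by
        rw [hT, Finset.mem_compl, not_not] at hj; exact hj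
      obtain ⟨i, -, rfl⟩ := Finset.mem_image.mp hj'
      rw [key i, map_sub]
      have h0 : π (∑ t, B i t • M (f t)) = 0 := (Submodule.Quotient.mk_eq_zero _).mpr (hv i)
      rw [h0, zero_sub, map_sum]
      refine neg_mem (AddSubgroup.sum_mem _ fun j hjT => ?_)
      rw [map_smul]
      exact zsmul_mem (AddSubgroup.subset_closure
        (Finset.mem_coe.mpr (Finset.mem_image_of_mem _ hjT))) _
  rw [eq_top_iff]
  rintro x -
  obtain ⟨y, rfl⟩ := Submodule.mkQ_surjective N x
  have hy : y = ∑ j, y j • Pi.single j (1:ℤ) := by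
    funext x'
    rw [Finset.sum_apply]
    rw [Finset.sum_eq_single x']
    · simp
    · intro j hj hjx; simp [Pi.single_apply, Ne.symm hjx]
    · intro h; exact absurd (Finset.mem_univ x') h
  rw [hy, map_sum]
  exact AddSubgroup.sum_mem _ fun j _ => by rw [map_smul]; exact zsmul_mem (hmem j) _
end
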